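/- Under the same hypotheses as the Canonical Equation (Λ : ℝⁿ × (0,∞) → ℝ C¹; M a probability density on ℝⁿ with ∫M(z)(1+|z|)e^{p·z}dz < ∞ for all p; U : [0,T] × ℝⁿ → ℝ C² solving ∂_tU(t,y) = −Λ(y, ∫M(z)e^{∇_yU(t,y)·z}dz); ȳ : [0,T] → ℝⁿ C¹ with ∇_yU(t,ȳ(t)) = 0 and D²_yU(t,ȳ(t)) invertible), assume in addition that M is even, i.e. ∫_{ℝⁿ} M(z)·z dz = 0, and that D²_yU(t,ȳ(t)) is negative definite for all t. Then the map t ↦ Λ(ȳ(t), 1) is nonincreasing: its derivative satisfies d/dt[Λ(ȳ(t),1)] = ∇_yΛ(ȳ(t),1) · [(D²_yU(t,ȳ(t)))⁻¹ · ∇_yΛ(ȳ(t),1)] ≤ 0 for all t ∈ [0,T]. -/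

import Mathlib

open MeasureTheory Set
open scoped RealInnerProductSpace

/-! Differentiating the critical-point identity `∇_y U(s, ȳ(s)) = 0` in `s` and exchanging the
mixed partial derivatives gives `∇_y ∂_t U + D²_y U · ȳ' = 0` at `(t, ȳ(t))`. By the
Hamilton–Jacobi equation `∇_y ∂_t U = -∇_y [Λ(y, η(t, y))]`, and at `ȳ(t)` the argument `η` is
stationary: `η(t, ·) = φ ∘ ∇_y U(t, ·)` with `φ(p) = ∫ M(z) e^{⟪p, z⟫} dz`, and
`∇φ(0) = ∫ M(z) z dz = 0` for an even kernel, while `η(t, ȳ(t)) = φ(0) = 1`. Hence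
`D²_y U · ȳ' = ∇_y Λ(ȳ, 1)`, and `d/dt Λ(ȳ, 1) = ⟪∇_y Λ, ȳ'⟫ = ⟪D²_y U · ȳ', ȳ'⟫ ≤ 0`. -/

theorem aestronglyMeasurable_of_integrable_mul_one_add_norm {E : Type*} [NormedAddCommGroup E]
    [MeasurableSpace E] [OpensMeasurableSpace E] {μ : Measure E} {M : E → ℝ}
    (hM : Integrable (fun z => M z * (1 + ‖z‖)) μ) : AEStronglyMeasurable M μ := by
  have hpos (z : E) : 1 + ‖z‖ ≠ 0 := by positivity
  refine (hM.aestronglyMeasurable.mul ((continuous_const.add continuous_norm).inv₀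
    hpos).aestronglyMeasurable).congr (ae_of_all _ fun z => ?_)
  simp only [Pi.mul_apply, Pi.inv_apply, Pi.add_apply]
  field_simp [hpos z]

theorem abs_mul_exp_mul_le_norm {m a b r s : ℝ} (hab : a ≤ b) (hs : 0 ≤ s) (hsr : s ≤ 1 + r) :
    |m| * Real.exp a * s ≤ ‖m * (1 + r) * Real.exp b‖ :=
  calc |m| * Real.exp a * s ≤ |m| * Real.exp b * (1 + r) := by gcongr
    _ = ‖m * (1 + r) * Real.exp b‖ := by
        rw [Real.norm_eq_abs, abs_mul, abs_mul, Real.abs_exp, abs_of_nonneg (hs.trans hsr)]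
        ring

section ExponentialMoments

variable {E : Type*} [NormedAddCommGroup E] [InnerProductSpace ℝ E]

theorem OrthonormalBasis.norm_le_sum_abs_inner {ι : Type*} [Fintype ι]
    (b : OrthonormalBasis ι ℝ E) (z : E) : ‖z‖ ≤ ∑ i, |⟪b i, z⟫| :=
  calc ‖z‖ = ‖∑ i, ⟪b i, z⟫ • b i‖ := by rw [b.sum_repr']
    _ ≤ ∑ i, ‖⟪b i, z⟫ • b i‖ := norm_sum_le _ _
    _ = ∑ i, |⟪b i, z⟫| := by simp [norm_smul, b.orthonormal.1]

theorem OrthonormalBasis.exp_norm_le_sum_exp_inner {ι : Type*} [Fintype ι] [DecidableEq ι]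
    (b : OrthonormalBasis ι ℝ E) (z : E) :
    Real.exp ‖z‖ ≤ ∑ s ∈ Finset.univ.powerset,
      Real.exp ⟪∑ i ∈ s, b i - ∑ i ∈ Finset.univ \ s, b i, z⟫ :=
  calc Real.exp ‖z‖ ≤ Real.exp (∑ i, |⟪b i, z⟫|) := Real.exp_le_exp.2 (b.norm_le_sum_abs_inner z)
    _ = ∏ i, Real.exp |⟪b i, z⟫| := Real.exp_sum _ _
    _ ≤ ∏ i, (Real.exp ⟪b i, z⟫ + Real.exp (-⟪b i, z⟫)) := by
        gcongr with i
        rcases abs_choice ⟪b i, z⟫ with h | h <;> rw [h] <;>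
          linarith [Real.exp_pos ⟪b i, z⟫, Real.exp_pos (-⟪b i, z⟫)]
    _ = _ := by
        rw [Finset.prod_add]
        refine Finset.sum_congr rfl fun s _ => ?_
        rw [← Real.exp_sum, ← Real.exp_sum, ← Real.exp_add, inner_sub_left, sum_inner, sum_inner,
          Finset.sum_neg_distrib, sub_eq_add_neg]

theorem hasFDerivAt_mul_exp_inner (m : ℝ) (z q : E) :
    HasFDerivAt (fun y => m * Real.exp ⟪y, z⟫) (innerSL ℝ ((m * Real.exp ⟪q, z⟫) • z)) q := by
  have hinner : (fun y => ⟪y, z⟫) = innerSL ℝ z := by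
    ext y
    rw [innerSL_apply_apply, real_inner_comm]
  have h := (((innerSL ℝ z).hasFDerivAt (x := q)).exp).const_mul m
  rw [← hinner] at h
  refine h.congr_fderiv ?_
  ext w
  simp only [real_inner_comm, smul_apply, coe_innerSL_apply, smul_eq_mul, map_smul]
  ring

variable [FiniteDimensional ℝ E] [MeasurableSpace E] [BorelSpace E] {μ : Measure E} {M : E → ℝ}

/- The sign vectors `∑ ±bᵢ` turn `exp ‖z‖` into finitely many exponential moments, so the
weight `exp ‖z‖` can be absorbed: this dominates the derivative of the integrand on a unit ball. -/
theorem integrable_mul_exp_inner_add_norm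
    (hMexp : ∀ p : E, Integrable (fun z => M z * (1 + ‖z‖) * Real.exp ⟪p, z⟫) μ) (p : E) :
    Integrable (fun z => M z * (1 + ‖z‖) * Real.exp (⟪p, z⟫ + ‖z‖)) μ := by
  classical
  let b := stdOrthonormalBasis ℝ E
  let σ : Finset (Fin (Module.finrank ℝ E)) → E :=
    fun s => ∑ i ∈ s, b i - ∑ i ∈ Finset.univ \ s, b i
  have hmeas : AEStronglyMeasurable (fun z => M z * (1 + ‖z‖) * Real.exp (⟪p, z⟫ + ‖z‖)) μ := by
    simp only [Real.exp_add, ← mul_assoc]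
    exact (hMexp p).aestronglyMeasurable.mul (by fun_prop : Continuous fun z : E =>
      Real.exp ‖z‖).aestronglyMeasurable
  refine (integrable_finsetSum Finset.univ.powerset fun s _ => (hMexp (p + σ s)).norm).mono' hmeas
    (ae_of_all _ fun z => ?_)
  have h1 : 0 ≤ 1 + ‖z‖ := by positivity
  calc ‖M z * (1 + ‖z‖) * Real.exp (⟪p, z⟫ + ‖z‖)‖
      = |M z| * (1 + ‖z‖) * Real.exp ⟪p, z⟫ * Real.exp ‖z‖ := by
        rw [Real.norm_eq_abs, abs_mul, abs_mul, abs_of_nonneg h1, Real.abs_exp, Real.exp_add,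
          mul_assoc _ (Real.exp _)]
    _ ≤ |M z| * (1 + ‖z‖) * Real.exp ⟪p, z⟫ * ∑ s ∈ Finset.univ.powerset, Real.exp ⟪σ s, z⟫ := by
        gcongr
        exact b.exp_norm_le_sum_exp_inner z
    _ = ∑ s ∈ Finset.univ.powerset, ‖M z * (1 + ‖z‖) * Real.exp ⟪p + σ s, z⟫‖ := by
        rw [Finset.mul_sum]
        refine Finset.sum_congr rfl fun s _ => ?_
        rw [Real.norm_eq_abs, abs_mul, abs_mul, abs_of_nonneg h1, Real.abs_exp, inner_add_left,
          Real.exp_add, mul_assoc _ (Real.exp _)]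

theorem hasFDerivAt_integral_mul_exp_inner
    (hMexp : ∀ p : E, Integrable (fun z => M z * (1 + ‖z‖) * Real.exp ⟪p, z⟫) μ) (p : E) :
    HasFDerivAt (fun q => ∫ z, M z * Real.exp ⟪q, z⟫ ∂μ)
      (innerSL ℝ (∫ z, (M z * Real.exp ⟪p, z⟫) • z ∂μ)) p := by
  have hM : AEStronglyMeasurable M μ :=
    aestronglyMeasurable_of_integrable_mul_one_add_norm (by simpa using hMexp 0)
  have hmeas (q : E) : AEStronglyMeasurable (fun z => M z * Real.exp ⟪q, z⟫) μ :=
    hM.mul (by fun_prop : Continuous fun z : E => Real.exp ⟪q, z⟫).aestronglyMeasurable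
  have hint : Integrable (fun z => (M z * Real.exp ⟪p, z⟫) • z) μ := by
    refine (hMexp p).norm.mono' ((hmeas p).smul aestronglyMeasurable_id)
      (ae_of_all _ fun z => ?_)
    rw [norm_smul, Real.norm_eq_abs, abs_mul, Real.abs_exp]
    exact abs_mul_exp_mul_le_norm le_rfl (norm_nonneg z) (le_add_of_nonneg_left zero_le_one)
  have key := hasFDerivAt_integral_of_dominated_of_fderiv_le (μ := μ)
    (F' := fun q z => innerSL ℝ ((M z * Real.exp ⟪q, z⟫) • z))
    (bound := fun z => ‖M z * (1 + ‖z‖) * Real.exp (⟪p, z⟫ + ‖z‖)‖)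
    (Metric.ball_mem_nhds p one_pos) (Filter.Eventually.of_forall hmeas)
    ((hMexp p).norm.mono' (hmeas p) (ae_of_all _ fun z => ?_))
    ((innerSL ℝ).continuous.comp_aestronglyMeasurable hint.aestronglyMeasurable)
    (ae_of_all _ fun z q hq => ?_) (integrable_mul_exp_inner_add_norm hMexp p).norm
    (ae_of_all _ fun z q _ => hasFDerivAt_mul_exp_inner (M z) z q)
  · rwa [(innerSL ℝ).integral_comp_comm hint] at key
  · rw [Real.norm_eq_abs, abs_mul, Real.abs_exp, ← mul_one (|M z| * _)]
    exact abs_mul_exp_mul_le_norm le_rfl zero_le_one (le_add_of_nonneg_right (norm_nonneg z))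
  · have hinner : ⟪q, z⟫ ≤ ⟪p, z⟫ + ‖z‖ := by
      have h1 : ‖q - p‖ ≤ 1 := (mem_ball_iff_norm.1 hq).le
      have h2 := real_inner_le_norm (q - p) z
      rw [inner_sub_left] at h2
      nlinarith [norm_nonneg z]
    rw [innerSL_apply_norm, norm_smul, Real.norm_eq_abs, abs_mul, Real.abs_exp]
    exact abs_mul_exp_mul_le_norm hinner (norm_nonneg z) (le_add_of_nonneg_left zero_le_one)

theorem hasFDerivAt_integral_mul_exp_inner_gradient_of_eq_zero
    (hMexp : ∀ p : E, Integrable (fun z => M z * (1 + ‖z‖) * Real.exp ⟪p, z⟫) μ)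
    (heven : ∫ z, M z • z ∂μ = 0) {u : E → ℝ} {y₀ : E}
    (hu : DifferentiableAt ℝ (gradient u) y₀) (hcrit : gradient u y₀ = 0) :
    HasFDerivAt (fun y => ∫ z, M z * Real.exp ⟪gradient u y, z⟫ ∂μ) (0 : E →L[ℝ] ℝ) y₀ := by
  have hmgf := hasFDerivAt_integral_mul_exp_inner hMexp (0 : E)
  simp only [inner_zero_left, Real.exp_zero, mul_one, heven, map_zero] at hmgf
  rw [← hcrit] at hmgf
  simpa only [ContinuousLinearMap.zero_comp, Function.comp_def] using hmgf.comp y₀ hu.hasFDerivAt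

end ExponentialMoments
section PartialGradient

variable {E : Type*} [NormedAddCommGroup E] [InnerProductSpace ℝ E] [CompleteSpace E]
  {U : ℝ → E → ℝ}

theorem gradient_neg (f : E → ℝ) (x : E) : gradient (fun y => -f y) x = -gradient f x := by
  rw [gradient, gradient, fderiv_fun_neg, map_neg]

theorem exists_hasFDerivAt_gradient_uncurry (hU : ContDiff ℝ 2 (fun q : ℝ × E => U q.1 q.2))
    (q : ℝ × E) : ∃ G' : ℝ × E →L[ℝ] E,
      HasFDerivAt (fun q : ℝ × E => gradient (U q.1) q.2) G' q ∧
      ∀ v w, ⟪G' v, w⟫ = fderiv ℝ (fderiv ℝ (fun q : ℝ × E => U q.1 q.2)) q v (0, w) := by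
  set f := fun q : ℝ × E => U q.1 q.2
  let R : (ℝ × E →L[ℝ] ℝ) →L[ℝ] E :=
    (InnerProductSpace.toDual ℝ E).symm.toContinuousLinearEquiv.toContinuousLinearMap.comp
      ((ContinuousLinearMap.compL ℝ E (ℝ × E) ℝ).flip (ContinuousLinearMap.inr ℝ ℝ E))
  have hR : ∀ φ w, ⟪R φ, w⟫ = φ (0, w) := fun φ w => by
    simp [R, InnerProductSpace.toDual_symm_apply]
  have hf : Differentiable ℝ f := hU.differentiable two_ne_zero
  have hgrad : (fun q : ℝ × E => gradient (U q.1) q.2) = fun q => R (fderiv ℝ f q) := by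
    ext1 ⟨t, y⟩
    have : HasFDerivAt (U t) ((fderiv ℝ f (t, y)).comp (ContinuousLinearMap.inr ℝ ℝ E)) y :=
      (hf (t, y)).hasFDerivAt.comp y (hasFDerivAt_prodMk_right t y)
    rw [gradient, this.fderiv]
    rfl
  have hf' : DifferentiableAt ℝ (fderiv ℝ f) q :=
    (hU.fderiv_right (m := 1) le_rfl).differentiable one_ne_zero q
  refine ⟨R.comp (fderiv ℝ (fderiv ℝ f) q), ?_, fun v w => hR _ w⟩
  rw [hgrad]
  exact HasFDerivAt.comp (𝕜 := ℝ) (f := fderiv ℝ f) (g := R) q R.hasFDerivAt hf'.hasFDerivAt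

theorem differentiableAt_gradient_of_contDiff_uncurry
    (hU : ContDiff ℝ 2 (fun q : ℝ × E => U q.1 q.2)) (t : ℝ) (y : E) :
    DifferentiableAt ℝ (gradient (U t)) y := by
  obtain ⟨G', hG', -⟩ := exists_hasFDerivAt_gradient_uncurry hU (t, y)
  exact (hG'.comp y (hasFDerivAt_prodMk_right t y)).differentiableAt

theorem inner_fderiv_gradient_apply (hU : ContDiff ℝ 2 (fun q : ℝ × E => U q.1 q.2))
    (t : ℝ) (y v w : E) :
    ⟪fderiv ℝ (gradient (U t)) y v, w⟫ =
      fderiv ℝ (fderiv ℝ (fun q : ℝ × E => U q.1 q.2)) (t, y) (0, v) (0, w) := by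
  obtain ⟨G', hG', hinner⟩ := exists_hasFDerivAt_gradient_uncurry hU (t, y)
  have hG'y : HasFDerivAt (gradient (U t)) (G'.comp (ContinuousLinearMap.inr ℝ ℝ E)) y :=
    hG'.comp y (hasFDerivAt_prodMk_right t y)
  rw [hG'y.fderiv]
  exact hinner _ w

theorem inner_gradient_deriv (hU : ContDiff ℝ 2 (fun q : ℝ × E => U q.1 q.2))
    (t : ℝ) (y w : E) :
    ⟪gradient (fun y => deriv (fun s => U s y) t) y, w⟫ =
      fderiv ℝ (fderiv ℝ (fun q : ℝ × E => U q.1 q.2)) (t, y) (1, 0) (0, w) := by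
  set f := fun q : ℝ × E => U q.1 q.2
  have hf : Differentiable ℝ f := hU.differentiable two_ne_zero
  have hdt : (fun y => deriv (fun s => U s y) t) = fun y => fderiv ℝ f (t, y) (1, 0) := by
    ext y
    exact ((hf (t, y)).hasFDerivAt.comp_hasDerivAt t
      ((hasDerivAt_id t).prodMk (hasDerivAt_const t y))).deriv
  have hf' : DifferentiableAt ℝ (fderiv ℝ f) (t, y) :=
    (hU.fderiv_right (m := 1) le_rfl).differentiable one_ne_zero _
  have hfy : HasFDerivAt (fun y => fderiv ℝ f (t, y))
      ((fderiv ℝ (fderiv ℝ f) (t, y)).comp (ContinuousLinearMap.inr ℝ ℝ E)) y :=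
    HasFDerivAt.comp (𝕜 := ℝ) (g := fderiv ℝ f) y hf'.hasFDerivAt (hasFDerivAt_prodMk_right t y)
  have hderiv := hfy.clm_apply (hasFDerivAt_const ((1 : ℝ), (0 : E)) y)
  rw [inner_gradient_left, hdt, hderiv.fderiv]
  simpa using (hU.contDiffAt.isSymmSndFDerivAt (by simp [minSmoothness_of_isRCLikeNormedField])
    (0, w) (1, 0))

theorem hasDerivWithinAt_gradient_comp (hU : ContDiff ℝ 2 (fun q : ℝ × E => U q.1 q.2))
    {γ : ℝ → E} {γ' : E} {s : Set ℝ} {t : ℝ} (hγ : HasDerivWithinAt γ γ' s t) :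
    HasDerivWithinAt (fun τ => gradient (U τ) (γ τ))
      (gradient (fun y => deriv (fun τ => U τ y) t) (γ t) + fderiv ℝ (gradient (U t)) (γ t) γ')
      s t := by
  obtain ⟨G', hG', hinner⟩ := exists_hasFDerivAt_gradient_uncurry hU (t, γ t)
  have hcomp : HasDerivWithinAt (fun τ => gradient (U τ) (γ τ)) (G' (1, γ')) s t :=
    hG'.comp_hasDerivWithinAt (l := fun q : ℝ × E => gradient (U q.1) q.2) t
      ((hasDerivWithinAt_id t s).prodMk hγ)
  refine hcomp.congr_deriv (ext_inner_right ℝ fun w => ?_)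
  rw [inner_add_left, inner_gradient_deriv hU, inner_fderiv_gradient_apply hU, hinner,
    ← add_apply, ← map_add, Prod.mk_add_mk, add_zero, zero_add]

theorem gradient_deriv_add_fderiv_gradient_eq_zero
    (hU : ContDiff ℝ 2 (fun q : ℝ × E => U q.1 q.2)) {γ : ℝ → E} {γ' : E} {s : Set ℝ} {t : ℝ}
    (hs : UniqueDiffWithinAt ℝ s t) (ht : t ∈ s) (hγ : HasDerivWithinAt γ γ' s t)
    (hcrit : ∀ τ ∈ s, gradient (U τ) (γ τ) = 0) :
    gradient (fun y => deriv (fun τ => U τ y) t) (γ t) + fderiv ℝ (gradient (U t)) (γ t) γ' = 0 :=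
  hs.eq_deriv _ (hasDerivWithinAt_gradient_comp hU hγ)
    ((hasDerivWithinAt_const t s 0).congr hcrit (hcrit t ht))

theorem gradient_comp_eq_of_hasFDerivAt_zero {F : Type*} [NormedAddCommGroup F] [NormedSpace ℝ F]
    {Λ : E → F → ℝ} {g : E → F} {y₀ : E}
    (hΛ : DifferentiableAt ℝ (fun p : E × F => Λ p.1 p.2) (y₀, g y₀))
    (hg : HasFDerivAt g (0 : E →L[ℝ] F) y₀) :
    gradient (fun y => Λ y (g y)) y₀ = gradient (fun y => Λ y (g y₀)) y₀ := by
  have h₁ : HasFDerivAt (fun y => Λ y (g y))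
      ((fderiv ℝ (fun p : E × F => Λ p.1 p.2) (y₀, g y₀)).comp
        ((ContinuousLinearMap.id ℝ E).prod 0)) y₀ :=
    hΛ.hasFDerivAt.comp (g := fun p : E × F => Λ p.1 p.2) y₀ ((hasFDerivAt_id y₀).prodMk hg)
  have h₂ : HasFDerivAt (fun y => Λ y (g y₀))
      ((fderiv ℝ (fun p : E × F => Λ p.1 p.2) (y₀, g y₀)).comp
        (ContinuousLinearMap.inl ℝ E F)) y₀ :=
    hΛ.hasFDerivAt.comp (𝕜 := ℝ) (g := fun p : E × F => Λ p.1 p.2) (f := fun y => (y, g y₀)) y₀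
      (hasFDerivAt_prodMk_left y₀ (g y₀))
  rw [gradient, gradient, h₁.fderiv, h₂.fderiv]
  rfl

end PartialGradient

section RingInverse

variable {R M : Type*} [Ring R] [TopologicalSpace M] [AddCommGroup M] [IsTopologicalAddGroup M]
  [Module R M] {H : M →L[R] M}

theorem ContinuousLinearMap.ring_inverse_apply_apply (hH : IsUnit H) (v : M) :
    Ring.inverse H (H v) = v :=
  congrArg (fun L : M →L[R] M => L v) (Ring.inverse_mul_cancel H hH)

theorem ContinuousLinearMap.apply_ring_inverse_apply (hH : IsUnit H) (v : M) :
    H (Ring.inverse H v) = v :=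
  congrArg (fun L : M →L[R] M => L v) (Ring.mul_inverse_cancel H hH)

end RingInverse

section Lyapunov

variable {E : Type*} [NormedAddCommGroup E] [InnerProductSpace ℝ E]

theorem inner_ring_inverse_apply_nonpos {H : E →L[ℝ] E} (hH : IsUnit H)
    (hneg : ∀ v, v ≠ 0 → ⟪H v, v⟫ < 0) (g : E) : ⟪g, Ring.inverse H g⟫ ≤ 0 := by
  nth_rw 1 [← H.apply_ring_inverse_apply hH g]
  rcases eq_or_ne (Ring.inverse H g) 0 with h | h
  · simp [h]
  · exact (hneg _ h).le

theorem hasDerivWithinAt_comp_of_apply_eq_gradient [CompleteSpace E] {V : E → ℝ} {γ : ℝ → E}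
    {γ' : E} {s : Set ℝ} {t : ℝ} {H : E →L[ℝ] E} (hV : DifferentiableAt ℝ V (γ t))
    (hγ : HasDerivWithinAt γ γ' s t) (hH : IsUnit H) (hHγ : H γ' = gradient V (γ t)) :
    HasDerivWithinAt (fun τ => V (γ τ)) ⟪gradient V (γ t), Ring.inverse H (gradient V (γ t))⟫
      s t := by
  have h := hV.hasGradientAt.hasFDerivAt.comp_hasDerivWithinAt t hγ
  rw [InnerProductSpace.toDual_apply_apply, ← hHγ] at h
  rwa [← hHγ, H.ring_inverse_apply_apply hH]

end Lyapunov

theorem antitoneOn_Icc_of_hasDerivWithinAt_nonpos {f f' : ℝ → ℝ} {a b : ℝ}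
    (h : ∀ t ∈ Icc a b, HasDerivWithinAt f (f' t) (Icc a b) t ∧ f' t ≤ 0) :
    AntitoneOn f (Icc a b) :=
  antitoneOn_of_hasDerivWithinAt_nonpos (convex_Icc a b)
    (fun t ht => (h t ht).1.continuousWithinAt)
    (fun t ht => (h t (interior_subset ht)).1.mono interior_subset)
    (fun t ht => (h t (interior_subset ht)).2)

theorem fitness_lyapunov_general
    (n : ℕ) (T : ℝ) (hT : 0 < T)
    (Λ : EuclideanSpace ℝ (Fin n) → ℝ → ℝ)
    (hΛ : ContDiff ℝ 1 (fun p : EuclideanSpace ℝ (Fin n) × ℝ => Λ p.1 p.2))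
    (M : EuclideanSpace ℝ (Fin n) → ℝ)
    (hMprob : ∫ z, M z = 1)
    (hMexp : ∀ p : EuclideanSpace ℝ (Fin n),
      Integrable (fun z => M z * (1 + ‖z‖) * Real.exp ⟪p, z⟫))
    (U : ℝ → EuclideanSpace ℝ (Fin n) → ℝ)
    (hU : ContDiff ℝ 2 (fun q : ℝ × EuclideanSpace ℝ (Fin n) => U q.1 q.2))
    (η : ℝ → EuclideanSpace ℝ (Fin n) → ℝ)
    (hη : ∀ t y, η t y = ∫ z, M z * Real.exp ⟪gradient (U t) y, z⟫)
    (hHJ : ∀ t ∈ Icc (0:ℝ) T, ∀ y, deriv (fun s => U s y) t = -Λ y (η t y))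
    (ybar ybar' : ℝ → EuclideanSpace ℝ (Fin n))
    (hybar : ∀ t ∈ Icc (0:ℝ) T, HasDerivWithinAt ybar (ybar' t) (Icc 0 T) t)
    (hcrit : ∀ t ∈ Icc (0:ℝ) T, gradient (U t) (ybar t) = 0)
    (hinv : ∀ t ∈ Icc (0:ℝ) T,
      IsUnit (fderiv ℝ (fun y => gradient (U t) y) (ybar t)))
    (heven : (∫ z, M z • z) = (0 : EuclideanSpace ℝ (Fin n)))
    (hnegdef : ∀ t ∈ Icc (0:ℝ) T, ∀ v : EuclideanSpace ℝ (Fin n), v ≠ 0 →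
      ⟪(fderiv ℝ (fun y => gradient (U t) y) (ybar t)) v, v⟫ < 0) :
    AntitoneOn (fun t => Λ (ybar t) 1) (Icc 0 T) ∧
    ∀ t ∈ Icc (0:ℝ) T,
      HasDerivWithinAt (fun s => Λ (ybar s) 1)
        (⟪gradient (fun y => Λ y 1) (ybar t),
          (Ring.inverse (fderiv ℝ (fun y => gradient (U t) y) (ybar t)))
            (gradient (fun y => Λ y 1) (ybar t))⟫)
        (Icc 0 T) t ∧
      ⟪gradient (fun y => Λ y 1) (ybar t),
        (Ring.inverse (fderiv ℝ (fun y => gradient (U t) y) (ybar t)))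
          (gradient (fun y => Λ y 1) (ybar t))⟫ ≤ 0 := by
  have hΛd : Differentiable ℝ (fun p : EuclideanSpace ℝ (Fin n) × ℝ => Λ p.1 p.2) :=
    hΛ.differentiable one_ne_zero
  have hcanon : ∀ t ∈ Icc (0:ℝ) T,
      fderiv ℝ (gradient (U t)) (ybar t) (ybar' t) = gradient (fun y => Λ y 1) (ybar t) := by
    intro t ht
    have hη₀ : HasFDerivAt (η t) 0 (ybar t) := funext (hη t) ▸
      hasFDerivAt_integral_mul_exp_inner_gradient_of_eq_zero hMexp heven
        (differentiableAt_gradient_of_contDiff_uncurry hU t (ybar t)) (hcrit t ht)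
    have hη₁ : η t (ybar t) = 1 := by simpa [hη, hcrit t ht] using hMprob
    have h := gradient_deriv_add_fderiv_gradient_eq_zero hU (uniqueDiffOn_Icc hT t ht) ht
      (hybar t ht) hcrit
    rwa [funext (hHJ t ht), gradient_neg, gradient_comp_eq_of_hasFDerivAt_zero (hΛd _) hη₀, hη₁,
      neg_add_eq_zero, eq_comm] at h
  refine ⟨antitoneOn_Icc_of_hasDerivWithinAt_nonpos ?key, ?key⟩
  intro t ht
  exact ⟨hasDerivWithinAt_comp_of_apply_eq_gradient
      ((hΛd _).comp (ybar t) (differentiableAt_id.prodMk (differentiableAt_const 1)))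
      (hybar t ht) (hinv t ht) (hcanon t ht),
    inner_ring_inverse_apply_nonpos (hinv t ht) (hnegdef t ht) _⟩

/-- Lyapunov property of the effective fitness along the
Canonical Equation: if the mutation kernel is even and the Hessian
`D²_yU(t,ȳ(t))` is negative definite, then `t ↦ Λ(ȳ(t),1)` is nonincreasing,
with `d/dt Λ(ȳ(t),1) = ∇_yΛ·(D²_yU)⁻¹∇_yΛ ≤ 0`. -/
theorem fitness_lyapunov
    (n : ℕ) (hn : 1 ≤ n) (T : ℝ) (hT : 0 < T)
    (Λ : EuclideanSpace ℝ (Fin n) → ℝ → ℝ)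
    (hΛ : ContDiff ℝ 1 (fun p : EuclideanSpace ℝ (Fin n) × ℝ => Λ p.1 p.2))
    (M : EuclideanSpace ℝ (Fin n) → ℝ)
    (hMmeas : Measurable M) (hMnn : ∀ z, 0 ≤ M z)
    (hMprob : ∫ z, M z = 1)
    (hMexp : ∀ p : EuclideanSpace ℝ (Fin n),
      Integrable (fun z => M z * (1 + ‖z‖) * Real.exp ⟪p, z⟫))
    (U : ℝ → EuclideanSpace ℝ (Fin n) → ℝ)
    (hU : ContDiff ℝ 2 (fun q : ℝ × EuclideanSpace ℝ (Fin n) => U q.1 q.2))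
    (η : ℝ → EuclideanSpace ℝ (Fin n) → ℝ)
    (hη : ∀ t y, η t y = ∫ z, M z * Real.exp ⟪gradient (U t) y, z⟫)
    (hHJ : ∀ t ∈ Icc (0:ℝ) T, ∀ y, deriv (fun s => U s y) t = -Λ y (η t y))
    (ybar ybar' : ℝ → EuclideanSpace ℝ (Fin n))
    (hybar : ∀ t ∈ Icc (0:ℝ) T, HasDerivWithinAt ybar (ybar' t) (Icc 0 T) t)
    (hybar'cont : ContinuousOn ybar' (Icc 0 T))
    (hcrit : ∀ t ∈ Icc (0:ℝ) T, gradient (U t) (ybar t) = 0)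
    (hinv : ∀ t ∈ Icc (0:ℝ) T,
      IsUnit (fderiv ℝ (fun y => gradient (U t) y) (ybar t)))
    (heven : (∫ z, M z • z) = (0 : EuclideanSpace ℝ (Fin n)))
    (hnegdef : ∀ t ∈ Icc (0:ℝ) T, ∀ v : EuclideanSpace ℝ (Fin n), v ≠ 0 →
      ⟪(fderiv ℝ (fun y => gradient (U t) y) (ybar t)) v, v⟫ < 0) :
    AntitoneOn (fun t => Λ (ybar t) 1) (Icc 0 T) ∧
    ∀ t ∈ Icc (0:ℝ) T,
      HasDerivWithinAt (fun s => Λ (ybar s) 1)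
        (⟪gradient (fun y => Λ y 1) (ybar t),
          (Ring.inverse (fderiv ℝ (fun y => gradient (U t) y) (ybar t)))
            (gradient (fun y => Λ y 1) (ybar t))⟫)
        (Icc 0 T) t ∧
      ⟪gradient (fun y => Λ y 1) (ybar t),
        (Ring.inverse (fderiv ℝ (fun y => gradient (U t) y) (ybar t)))
          (gradient (fun y => Λ y 1) (ybar t))⟫ ≤ 0 :=
  fitness_lyapunov_general n T hT Λ hΛ M hMprob hMexp U hU η hη hHJ ybar ybar' hybar hcrit hinv
    heven hnegdef
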